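/- Let ξ, λ be partitions of n and η, μ be partitions of m. Then the domino-tabloid weight counts satisfy the supermultiplicativity w_{(ξ∪η)(λ∪μ)} ≥ w_{ξλ} · w_{ημ}, where ξ∪η denotes the partition obtained by merging the parts of ξ and η in weakly decreasing order. -/

import Mathlib

open MvPolynomial

noncomputable section SymmetricFunctionCore

/-- The ring of symmetric functions over `R`, modeled as the polynomial ring
`R[h₁, h₂, …]` in the complete homogeneous symmetric functions. -/
abbrev SF (R : Type*) [CommRing R] := MvPolynomial ℕ+ R

variable (R : Type*) [CommRing R]

/-- The complete homogeneous symmetric function `h n` (with `h 0 = 1`). -/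
def hh (n : ℕ) : SF R := if h : 0 < n then X (⟨n, h⟩ : ℕ+) else 1

/-- `h_λ` for a multiset `s` of parts. -/
def hprod (s : Multiset ℕ) : SF R := (s.map (hh R)).prod

/-- `h_λ` for a partition `λ`. -/
def hOf {n : ℕ} (lam : n.Partition) : SF R := hprod R lam.parts

/-- A symmetric function is homogeneous of degree `n` when it is weighted homogeneous
for the weight assigning degree `i` to `hᵢ`. -/
def IsHomogSF (f : SF R) (n : ℕ) : Prop :=
  IsWeightedHomogeneous (fun i : ℕ+ => (i : ℕ)) f n

/-- The power sum symmetric functions, defined from the `hᵢ` by Newton's identity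
`p n = n * h n - ∑_{i=1}^{n-1} h (n - i) * p i`, with `p 0 = 1`. -/
def psum : ℕ → SF R
  | 0 => 1
  | (n+1) => (n + 1 : ℕ) • hh R (n + 1) -
      ∑ i ∈ (Finset.range n).attach, hh R (n - i) * psum (i + 1)
  termination_by n => n
  decreasing_by have := Finset.mem_range.mp i.2; omega

/-- `p_λ` for a multiset of parts. -/
def pprod (s : Multiset ℕ) : SF R := (s.map (psum R)).prod

/-- The realization of an abstract symmetric function as an honest symmetric
polynomial in `k` variables, sending `h n` to the complete homogeneous polynomial. -/
def realize (k : ℕ) : SF R →ₐ[R] MvPolynomial (Fin k) R :=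
  aeval fun n : ℕ+ => hsymm (Fin k) R (n : ℕ)

/-- The parts of a multiset, sorted in weakly decreasing order. -/
def sortedDesc (s : Multiset ℕ) : List ℕ := (s.sort (· ≤ ·)).reverse

/-- The exponent vector `x₁^{λ₁} ⋯` attached to a multiset of parts `s`, in `s.sum` variables. -/
def expOf (s : Multiset ℕ) : Fin s.sum →₀ ℕ :=
  Finsupp.equivFunOnFinite.symm fun j => (sortedDesc s).getD j 0

/-- The coefficient of the monomial symmetric function `m_s` in a symmetric function `g`,
read off as the coefficient of the monomial `x^{s}` in a realization of `g` with
sufficiently many variables. -/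
def mcoeff (s : Multiset ℕ) (g : SF R) : R :=
  coeff (expOf s) (realize R s.sum g)

/-- The multiset of parts attached to an exponent vector of a monomial in the `hᵢ`:
the monomial `∏ hᵢ^{dᵢ}` corresponds to the partition with `dᵢ` parts equal to `i`. -/
def partsOfExp (d : ℕ+ →₀ ℕ) : Multiset ℕ :=
  d.sum fun i m => Multiset.replicate m (i : ℕ)

/-- The Hall inner product on symmetric functions, determined by
`⟨h_λ, m_μ⟩ = δ_{λμ}`: expand the first argument in the basis `h_λ` and pair with the
`m`-coefficients of the second argument. -/
def hallInner (f g : SF R) : R :=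
  ∑ d ∈ f.support, f.coeff d * mcoeff R (partsOfExp d) g

variable (F : Type*) [Field F]

/-- The matrix `⟨h_λ, h_μ⟩` of the Hall pairing on the `h` basis in degree `n`. -/
def hmMatrix (n : ℕ) : Matrix (Nat.Partition n) (Nat.Partition n) F :=
  fun lam mu => mcoeff F lam.parts (hOf F mu)

/-- The monomial symmetric function `m_λ`, expanded in the `h` basis as the basis
dual to `{h_μ}` under the Hall inner product. -/
def msym {n : ℕ} (lam : n.Partition) : SF F :=
  ∑ mu : Nat.Partition n, ((hmMatrix F n)⁻¹ lam mu) • hOf F mu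


/-- `h_z` for an integer index: `0` for negative indices. -/
def hz (z : ℤ) : SF R := if 0 ≤ z then hh R z.toNat else 0

/-- The Schur function `s_λ`, defined by the Jacobi–Trudi formula
`s_λ = det (h_{λᵢ - i + j})`. -/
def schurOf {n : ℕ} (lam : n.Partition) : SF R :=
  Matrix.det (Matrix.of fun i j : Fin (sortedDesc lam.parts).length =>
    hz R (((sortedDesc lam.parts).getD i 0 : ℤ) - (i : ℤ) + (j : ℤ)))

/-- A partition of `n` is a hook if it has the form `(a, 1^{n-a})` with `a ≥ 1`. -/
def IsHook {n : ℕ} (lam : n.Partition) : Prop :=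
  ∃ a : ℕ, 1 ≤ a ∧ lam.parts = a ::ₘ Multiset.replicate (n - a) 1

/-- The sign `ε_λ = (-1)^{|λ| - ℓ(λ)}` of a permutation of cycle type `λ`. -/
def eps (s : Multiset ℕ) : ℤ := (-1) ^ (s.sum - s.card)

/-- `z_λ = ∏ᵢ i^{mᵢ} mᵢ!` where `mᵢ` is the multiplicity of `i` in `λ`. -/
def zee (s : Multiset ℕ) : ℕ :=
  ∏ i ∈ s.toFinset, i ^ s.count i * (s.count i).factorial

/-- The total weight `w_{shape, type}` of domino tabloids of given shape and type: a
domino tabloid assigns to each row of the shape an ordered arrangement (a composition)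
of dominoes filling that row, so that the multiset of all domino lengths is the type;
its weight is the product over the rows of the length of the leftmost domino. -/
def dominoW (shape ty : Multiset ℕ) : ℕ :=
  ∑ T ∈ Finset.univ.filter
      (fun T : ∀ i : Fin (sortedDesc shape).length,
          Composition ((sortedDesc shape).get i) =>
        (∑ i, ((T i).blocks : Multiset ℕ)) = ty),
    ∏ i, (T i).blocks.headI

/-- The elementary symmetric functions, defined from the `hᵢ` by the identity
`∑_{i=0}^{n} (-1)^i e_i h_{n-i} = 0` for `n ≥ 1`. -/
def ee : ℕ → SF R
  | 0 => 1
  | (n+1) => (-1 : SF R) ^ (n + 2) *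
      ∑ i ∈ (Finset.range (n + 1)).attach, (-1 : SF R) ^ (i : ℕ) * ee i * hh R (n + 1 - i)
  termination_by n => n
  decreasing_by have := Finset.mem_range.mp i.2; omega

/-- `e_λ` for a multiset of parts. -/
def eprod (s : Multiset ℕ) : SF R := (s.map (ee R)).prod

variable {F} in
/-- The skew complete homogeneous symmetric function `h_{λ/μ}`, characterized by
`⟨h_{λ/μ}, f⟩ = ⟨h_λ, h_μ f⟩`; its expansion in the `h` basis is
`h_{λ/μ} = ∑_{ν ⊢ n} ⟨h_λ, h_μ m_ν⟩ h_ν`. -/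
def hskew {m n : ℕ} (lam : Nat.Partition (m + n)) (mu : Nat.Partition m) : SF F :=
  ∑ nu : Nat.Partition n, hallInner F (hOf F lam) (hOf F mu * msym F nu) • hOf F nu

variable {F} in
/-- The skew elementary symmetric function `e_{λ/μ}`, characterized by
`⟨e_{λ/μ}, f⟩ = ⟨e_λ, e_μ f⟩`. -/
def eskew {m n : ℕ} (lam : Nat.Partition (m + n)) (mu : Nat.Partition m) : SF F :=
  ∑ nu : Nat.Partition n,
    hallInner F (eprod F lam.parts) (eprod F mu.parts * msym F nu) • hOf F nu

variable {F} in
/-- The skew Schur function `s_{λ/μ}`, characterized by `⟨s_{λ/μ}, f⟩ = ⟨s_λ, s_μ f⟩`. -/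
def sskew {m n : ℕ} (lam : Nat.Partition (m + n)) (mu : Nat.Partition m) : SF F :=
  ∑ nu : Nat.Partition n,
    hallInner F (schurOf F lam) (schurOf F mu * msym F nu) • hOf F nu

/-- The `i`-th part (`0`-indexed) of a partition, `0` if `i` exceeds the length. -/
def rowOf {n : ℕ} (lam : n.Partition) (i : ℕ) : ℕ := (sortedDesc lam.parts).getD i 0

/-- The set of cells of the skew diagram `λ/μ`. -/
def skewCells {m n : ℕ} (lam : Nat.Partition (m + n)) (mu : Nat.Partition m) :
    Set (ℕ × ℕ) :=
  {c | rowOf mu c.1 ≤ c.2 ∧ c.2 < rowOf lam c.1}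

/-- Two cells are adjacent when they share an edge. -/
def CellAdj (c c' : ℕ × ℕ) : Prop :=
  (c.1 = c'.1 ∧ (c.2 = c'.2 + 1 ∨ c'.2 = c.2 + 1)) ∨
  (c.2 = c'.2 ∧ (c.1 = c'.1 + 1 ∨ c'.1 = c.1 + 1))

/-- `λ/μ` is a ribbon (border strip): `μ ⊆ λ`, the skew diagram is nonempty,
edgewise connected, and contains no `2 × 2` block of cells. -/
def IsRibbon {m n : ℕ} (lam : Nat.Partition (m + n)) (mu : Nat.Partition m) : Prop :=
  (∀ i, rowOf mu i ≤ rowOf lam i) ∧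
  (skewCells lam mu).Nonempty ∧
  (∀ c ∈ skewCells lam mu, ∀ c' ∈ skewCells lam mu,
    Relation.ReflTransGen (fun a b => CellAdj a b ∧ b ∈ skewCells lam mu) c c') ∧
  ¬∃ i j : ℕ, (i, j) ∈ skewCells lam mu ∧ (i + 1, j) ∈ skewCells lam mu ∧
      (i, j + 1) ∈ skewCells lam mu ∧ (i + 1, j + 1) ∈ skewCells lam mu

variable {F} in
/-- The algebra endomorphism of `Λ` sending `p_k ↦ p_k / (1 - t^k)`, written on the
generators `h_n = ∑_{λ ⊢ n} z_λ⁻¹ p_λ`. -/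
def thetaT (t : F) : SF F →ₐ[F] SF F :=
  aeval fun i : ℕ+ =>
    ∑ lam : Nat.Partition (i : ℕ),
      ((zee lam.parts : F)⁻¹ * (lam.parts.map fun a => (1 - t ^ a)⁻¹).prod) •
        pprod F lam.parts

variable {F} in
/-- The `t`-deformed Hall inner product, `⟨p_λ, p_μ⟩_t = δ_{λμ} z_λ ∏ᵢ (1 - t^{λᵢ})⁻¹`,
expressed via the ordinary Hall product as `⟨f, g⟩_t = ⟨Θ_t f, g⟩`. -/
def hallT (t : F) (f g : SF F) : F := hallInner F (thetaT t f) g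

/-- `μ` is dominated by `λ`: partial sums of `μ` are at most those of `λ`. -/
def Dominated {n : ℕ} (mu lam : n.Partition) : Prop :=
  ∀ k : ℕ, ((sortedDesc mu.parts).take k).sum ≤ ((sortedDesc lam.parts).take k).sum

/-- `n(λ) = ∑ᵢ (i - 1) λᵢ`. -/
def nInv (s : Multiset ℕ) : ℕ :=
  ∑ i ∈ Finset.range (sortedDesc s).length, i * (sortedDesc s).getD i 0

variable {F} in
/-- `φ_r(t) = (1 - t)(1 - t²) ⋯ (1 - t^r)`. -/
def phi (r : ℕ) (t : F) : F := ∏ j ∈ Finset.range r, (1 - t ^ (j + 1))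

variable {F} in
open scoped Classical in
/-- A family `P` of symmetric functions indexed by partitions is the family of
Hall–Littlewood symmetric functions `P_λ(x; t)` if each `P_λ` is `m_λ` plus a linear
combination of `m_μ` for `μ` strictly dominated by `λ`, and distinct members are
orthogonal for the `t`-inner product. -/
def IsHallLittlewoodP (t : F) (P : ∀ n : ℕ, Nat.Partition n → SF F) : Prop :=
  (∀ n (lam : Nat.Partition n), ∃ c : Nat.Partition n → F,
    P n lam = msym F lam +
      ∑ mu ∈ Finset.univ.filter fun mu => mu ≠ lam ∧ Dominated mu lam,
        c mu • msym F mu) ∧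
  ∀ n (lam mu : Nat.Partition n), lam ≠ mu → hallT t (P n lam) (P n mu) = 0

variable {F} in
/-- The `Q`-Hall–Littlewood function `Q_λ = (∏ᵢ φ_{mᵢ(λ)}(t)) P_λ`. -/
def QofP (t : F) (P : ∀ n : ℕ, Nat.Partition n → SF F) {n : ℕ}
    (lam : Nat.Partition n) : SF F :=
  (∏ i ∈ lam.parts.toFinset, phi (lam.parts.count i) t) • P n lam

end SymmetricFunctionCore

/-!
Tabloids of shapes `ξ`, `η` and types `λ`, `μ` glue, by putting the rows of one below those
of the other, into a tabloid of shape `ξ ∪ η` and type `λ ∪ μ` whose weight is the product of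
the two weights; gluing is injective. Since the total weight only depends on the multiset of
row lengths, the order in which the glued rows are listed is irrelevant.
-/

namespace DominoTabloid

open Finset

variable {ι κ : Type*} [Fintype ι] [DecidableEq ι] [Fintype κ] [DecidableEq κ]

/-- `dominoW` with the rows indexed by an arbitrary finite type `ι`, row `i` having length
`r i`. -/
def weight (r : ι → ℕ) (ty : Multiset ℕ) : ℕ :=
  ∑ T ∈ univ.filter
      (fun T : ∀ i, Composition (r i) => (∑ i, ((T i).blocks : Multiset ℕ)) = ty),
    ∏ i, (T i).blocks.headI

theorem weight_congr_equiv (e : κ ≃ ι) {r : ι → ℕ} {r' : κ → ℕ} (h : ∀ k, r (e k) = r' k)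
    (ty : Multiset ℕ) : weight r' ty = weight r ty := by
  obtain rfl : r' = r ∘ e := funext fun k => (h k).symm
  unfold weight
  rw [sum_filter, sum_filter]
  refine Fintype.sum_equiv (Equiv.piCongrLeft (fun i => Composition (r i)) e) _ _ fun T => ?_
  rw [← e.sum_comp, ← e.prod_comp]
  simp only [Equiv.piCongrLeft_apply_apply]

theorem weight_mul_weight_le_weight_sumElim (r : ι → ℕ) (s : κ → ℕ) (ty ty' : Multiset ℕ) :
    weight r ty * weight s ty' ≤ weight (Sum.elim r s) (ty + ty') := by
  unfold weight
  rw [sum_filter, sum_filter, sum_filter, sum_mul_sum,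
    ← Fintype.sum_equiv (Equiv.sumPiEquivProdPi fun i => Composition (Sum.elim r s i)).symm
      _ _ fun _ => rfl, Fintype.sum_prod_type]
  refine sum_le_sum fun T _ => sum_le_sum fun S _ => ?_
  simp only [Fintype.sum_sum_type, Fintype.prod_sum_type]
  dsimp only [Equiv.sumPiEquivProdPi, Equiv.coe_fn_symm_mk]
  split_ifs <;> simp_all

theorem weight_get_append (l₁ l₂ : List ℕ) (ty : Multiset ℕ) :
    weight (l₁ ++ l₂).get ty = weight (Sum.elim l₁.get l₂.get) ty := by
  refine (weight_congr_equiv (finSumFinEquiv.trans (finCongr List.length_append.symm))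
    (fun k => ?_) ty).symm
  rcases k with i | i <;> simp [List.getElem_append_right]

theorem weight_get_perm {l l' : List ℕ} (h : l.Perm l') (ty : Multiset ℕ) :
    weight l.get ty = weight l'.get ty :=
  weight_congr_equiv
    ⟨h.idxBij, h.symm.idxBij, h.idxBij_rightInverse_idxBij_symm, h.idxBij_leftInverse_idxBij_symm⟩
    (fun i => h.getElem_idxBij_eq_getElem i) ty

end DominoTabloid

open DominoTabloid

theorem coe_sortedDesc (s : Multiset ℕ) : (sortedDesc s : Multiset ℕ) = s := by
  simp [sortedDesc]

theorem dominoW_eq_weight (shape ty : Multiset ℕ) :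
    dominoW shape ty = weight (sortedDesc shape).get ty :=
  rfl

theorem dominoW_add (shape shape' ty : Multiset ℕ) :
    dominoW (shape + shape') ty =
      weight (Sum.elim (sortedDesc shape).get (sortedDesc shape').get) ty := by
  have hperm : (sortedDesc shape ++ sortedDesc shape').Perm (sortedDesc (shape + shape')) := by
    rw [← Multiset.coe_eq_coe, ← Multiset.coe_add, coe_sortedDesc, coe_sortedDesc, coe_sortedDesc]
  rw [dominoW_eq_weight, ← weight_get_perm hperm, weight_get_append]

/-- Supermultiplicativity of domino tabloid counts:
`w_{(ξ∪η)(λ∪μ)} ≥ w_{ξλ} · w_{ημ}`. -/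
theorem stmt9 {n m : ℕ} (xi lam : Nat.Partition n) (eta mu : Nat.Partition m) :
    dominoW xi.parts lam.parts * dominoW eta.parts mu.parts ≤
      dominoW (xi.parts + eta.parts) (lam.parts + mu.parts) := by
  rw [dominoW_eq_weight, dominoW_eq_weight, dominoW_add]
  exact weight_mul_weight_le_weight_sumElim _ _ _ _
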